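/- Let S ~ P on R^d and Y = S + Z with Z ~ N(0, \sigma^2 I_d) independent of S. Then for every n, E_{P^{\otimes n}}[\chi^2(\hat{P}_{S^n} * N_\sigma || P * N_\sigma)] = (1/n) I_{\chi^2}(S; Y), where I_{\chi^2}(S;Y) = \chi^2(P_{S,Y} || P_S \otimes P_Y). -/

import Mathlib

/-!
Write `φ` for the Gaussian density, `q = P ∗ φ` for the density of `P ∗ N_σ`, and
`t_z(x) = φ(z - x) / q(z)` for the posterior density of `S` given `Y = z` relative to `P`; it has
`P`-mean one. Both sides are then integrals over `z` against `q(z) dz`: the smoothed empirical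
measure has density `n⁻¹ ∑ᵢ φ(z - Sᵢ)`, so its χ²-divergence from `P ∗ N_σ` is
`∫ q(z) (n⁻¹ ∑ᵢ t_z(Sᵢ) - 1)² dz`, while `I_χ²(S; Y) = ∫ q(z) Var_P(t_z) dz`. After exchanging the
expectation over the sample with the `z`-integral (Tonelli), what remains is the variance of the
mean of `n` i.i.d. copies of `t_z(S)`, namely `Var_P(t_z) / n`; since `t_z ≥ 0`, this is also true
when the variance is infinite.
-/

open MeasureTheory ProbabilityTheory Real Filter
open scoped ENNReal NNReal RealInnerProductSpace

noncomputable section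

abbrev Euc (d : ℕ) := EuclideanSpace ℝ (Fin d)

/-- Density of the isotropic Gaussian `N(0, σ² I_d)`. -/
def gaussDensity (d : ℕ) (σ : ℝ) (x : Euc d) : ℝ :=
  (2 * π * σ ^ 2) ^ (-(d : ℝ) / 2) * Real.exp (-‖x‖ ^ 2 / (2 * σ ^ 2))

/-- The isotropic Gaussian measure `N(0, σ² I_d)` on `ℝ^d`. -/
def gaussian (d : ℕ) (σ : ℝ) : Measure (Euc d) :=
  volume.withDensity fun x => ENNReal.ofReal (gaussDensity d σ x)

/-- Convolution of two measures on `ℝ^d`. -/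
def mconv {d : ℕ} (P Q : Measure (Euc d)) : Measure (Euc d) :=
  (P.prod Q).map fun p => p.1 + p.2

/-- `P` is `K`-subgaussian. -/
def IsSubgaussian {d : ℕ} (P : Measure (Euc d)) (K : ℝ) : Prop :=
  ∀ α : Euc d, ∫ x, Real.exp (⟪α, x - ∫ y, y ∂P⟫) ∂P ≤ Real.exp (K ^ 2 * ‖α‖ ^ 2 / 2)

/-- Empirical measure of samples `s`. -/
def empMeasure {d n : ℕ} (s : Fin n → Euc d) : Measure (Euc d) :=
  (n : ℝ≥0∞)⁻¹ • ∑ i, Measure.dirac (s i)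

/-- Law of `n` i.i.d. samples from `P`. -/
def samples {d : ℕ} (n : ℕ) (P : Measure (Euc d)) : Measure (Fin n → Euc d) :=
  Measure.pi fun _ => P

/-- 1-Wasserstein distance. -/
def W1 {d : ℕ} (μ ν : Measure (Euc d)) : ℝ :=
  sInf {c | ∃ γ : Measure (Euc d × Euc d),
    γ.map Prod.fst = μ ∧ γ.map Prod.snd = ν ∧ c = ∫ p, ‖p.1 - p.2‖ ∂γ}

/-- Squared 2-Wasserstein distance. -/
def W2sq {d : ℕ} (μ ν : Measure (Euc d)) : ℝ :=
  sInf {c | ∃ γ : Measure (Euc d × Euc d),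
    γ.map Prod.fst = μ ∧ γ.map Prod.snd = ν ∧ c = ∫ p, ‖p.1 - p.2‖ ^ 2 ∂γ}

/-- Total variation distance. -/
def tvDist {d : ℕ} (μ ν : Measure (Euc d)) : ℝ :=
  sSup {c | ∃ A : Set (Euc d), MeasurableSet A ∧ c = |(μ A).toReal - (ν A).toReal|}

/-- χ²-divergence `∫ (dμ/dν - 1)² dν`. -/
def chiSq {α : Type*} [MeasurableSpace α] (μ ν : Measure α) : ℝ≥0∞ :=
  ∫⁻ x, ENNReal.ofReal (((μ.rnDeriv ν x).toReal - 1) ^ 2) ∂ν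

/-- Kullback-Leibler divergence `∫ log(dμ/dν) dμ` (real-valued). -/
def klDivR {α : Type*} [MeasurableSpace α] (μ ν : Measure α) : ℝ :=
  ∫ x, Real.log ((μ.rnDeriv ν x).toReal) ∂μ

/-- Differential entropy `-∫ log(dμ/dx) dμ`. -/
def diffEnt {d : ℕ} (μ : Measure (Euc d)) : ℝ :=
  -∫ x, Real.log ((μ.rnDeriv volume x).toReal) ∂μ

/-- Joint law of `(S, S + Z)` with `S ~ P`, `Z ~ N(0, σ² I_d)` independent. -/
def jointSY {d : ℕ} (P : Measure (Euc d)) (σ : ℝ) : Measure (Euc d × Euc d) :=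
  (P.prod (gaussian d σ)).map fun p => (p.1, p.1 + p.2)

/-- χ² mutual information `I_{χ²}(S; S+Z) = χ²(P_{S,Y} ‖ P_S ⊗ P_Y)`. -/
def chiMI {d : ℕ} (P : Measure (Euc d)) (σ : ℝ) : ℝ≥0∞ :=
  chiSq (jointSY P σ) (P.prod (mconv P (gaussian d σ)))

section EmpiricalMean

variable {E ι : Type*} [MeasurableSpace E] {P : Measure E} [IsProbabilityMeasure P]
  [Fintype ι] {t : E → ℝ}

lemma integral_mean_pi [Nonempty ι] (ht : Integrable t P) :
    ∫ s : ι → E, (Fintype.card ι : ℝ)⁻¹ * ∑ i, t (s i) ∂(Measure.pi fun _ => P) = P[t] := by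
  rw [integral_const_mul, integral_finsetSum _ fun i _ => integrable_comp_eval ht]
  simp only [fun i => integral_comp_eval (μ := fun _ : ι => P) (i := i) ht.aestronglyMeasurable,
    Finset.sum_const, Finset.card_univ, nsmul_eq_mul]
  field_simp

lemma memLp_of_memLp_sum_pi_of_nonneg {p : ℝ≥0∞} (ht : Measurable t) (ht0 : 0 ≤ t) (i₀ : ι)
    (hsum : MemLp (fun s : ι → E => ∑ i, t (s i)) p (Measure.pi fun _ => P)) : MemLp t p P := by
  have heval := (measurePreserving_eval (fun _ : ι => P) i₀).map_eq
  have hcoord : MemLp (fun s : ι → E => t (s i₀)) p (Measure.pi fun _ => P) :=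
    hsum.of_le (ht.comp (measurable_pi_apply i₀)).aestronglyMeasurable <| ae_of_all _ fun s => by
      simp only [Real.norm_eq_abs, abs_of_nonneg (ht0 _),
        abs_of_nonneg (Finset.sum_nonneg fun i _ => ht0 (s i))]
      exact Finset.single_le_sum (fun i _ => ht0 (s i)) (Finset.mem_univ i₀)
  rw [← heval]
  exact (memLp_map_measure_iff (by rw [heval]; exact ht.aestronglyMeasurable)
    (measurable_pi_apply i₀).aemeasurable).mpr hcoord

lemma evariance_sum_pi_of_nonneg (ht : Measurable t) (ht0 : 0 ≤ t) :
    eVar[fun s : ι → E => ∑ i, t (s i); Measure.pi fun _ => P]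
      = Fintype.card ι * eVar[t; P] := by
  rcases isEmpty_or_nonempty ι with hι | hι
  · simp [evariance]
  have hsum : Measurable fun s : ι → E => ∑ i, t (s i) := by fun_prop
  by_cases hL2 : MemLp t 2 P
  · have hvar := variance_sum_pi (μ := fun _ : ι => P) (X := fun _ => t) fun _ => hL2
    simp only [Finset.sum_const, Finset.card_univ, nsmul_eq_mul] at hvar
    have hsumL2 : MemLp (∑ i, fun s : ι → E => t (s i)) 2 (Measure.pi fun _ => P) :=
      memLp_finsetSum' _ fun i _ =>
        hL2.comp_measurePreserving (measurePreserving_eval (fun _ => P) i)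
    rw [← ofReal_variance hL2, ← ENNReal.ofReal_natCast, ← ENNReal.ofReal_mul (by positivity),
      ← hvar, ofReal_variance hsumL2]
    congr 1
    ext s
    simp
  · have hsum_not := mt (memLp_of_memLp_sum_pi_of_nonneg ht ht0 (Classical.arbitrary ι)) hL2
    rw [evariance_eq_top hsum.aestronglyMeasurable hsum_not,
      evariance_eq_top ht.aestronglyMeasurable hL2,
      ENNReal.mul_top (Nat.cast_ne_zero.mpr Fintype.card_ne_zero)]

lemma evariance_mean_pi_of_nonneg [Nonempty ι] (ht : Measurable t) (ht0 : 0 ≤ t) :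
    eVar[fun s : ι → E => (Fintype.card ι : ℝ)⁻¹ * ∑ i, t (s i); Measure.pi fun _ => P]
      = (Fintype.card ι : ℝ≥0∞)⁻¹ * eVar[t; P] := by
  rw [evariance_mul, evariance_sum_pi_of_nonneg ht ht0, ← mul_assoc]
  congr 1
  rw [ENNReal.ofReal_pow (by positivity), ENNReal.ofReal_inv_of_pos (by positivity),
    ENNReal.ofReal_natCast, sq, mul_assoc,
    ENNReal.inv_mul_cancel (Nat.cast_ne_zero.mpr Fintype.card_ne_zero) (by simp), mul_one]

lemma lintegral_sq_mean_sub_integral_pi [Nonempty ι] (ht : Measurable t) (ht0 : 0 ≤ t)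
    (hti : Integrable t P) :
    ∫⁻ s : ι → E, ENNReal.ofReal (((Fintype.card ι : ℝ)⁻¹ * ∑ i, t (s i) - P[t]) ^ 2)
        ∂(Measure.pi fun _ => P)
      = (Fintype.card ι : ℝ≥0∞)⁻¹ * ∫⁻ x, ENNReal.ofReal ((t x - P[t]) ^ 2) ∂P := by
  conv_lhs => rw [← integral_mean_pi (ι := ι) hti]
  rw [← evariance_eq_lintegral_ofReal, ← evariance_eq_lintegral_ofReal,
    evariance_mean_pi_of_nonneg ht ht0]

end EmpiricalMean

lemma MeasurableEquiv.map_withDensity_comp {α β : Type*} [MeasurableSpace α] [MeasurableSpace β]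
    (e : α ≃ᵐ β) (μ : Measure α) {f : β → ℝ≥0∞} (hf : Measurable f) :
    (μ.withDensity (f ∘ e)).map e = (μ.map e).withDensity f := by
  ext A hA
  rw [Measure.map_apply e.measurable hA, withDensity_apply _ hA,
    withDensity_apply _ (e.measurable hA), setLIntegral_map hA hf e.measurable]
  rfl

lemma map_snd_prod_withDensity {α β : Type*} [MeasurableSpace α] [MeasurableSpace β]
    (μ : Measure α) [SFinite μ] (ν : Measure β) [SFinite ν] {h : α × β → ℝ≥0∞}
    (hh : Measurable h) :
    ((μ.prod ν).withDensity h).map Prod.snd = ν.withDensity fun y => ∫⁻ x, h (x, y) ∂μ := by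
  ext A hA
  rw [Measure.map_apply measurable_snd hA, withDensity_apply _ (measurable_snd hA),
    withDensity_apply _ hA, ← Set.univ_prod, ← Measure.prod_restrict, Measure.restrict_univ,
    lintegral_prod_symm _ hh.aemeasurable]

lemma chiSq_withDensity_withDensity {α : Type*} [MeasurableSpace α] (m : Measure α)
    [SigmaFinite m] {p r : α → ℝ≥0∞} (hp : Measurable p) (hr : Measurable r)
    (hp0 : ∀ z, p z ≠ 0) (hpt : ∀ z, p z ≠ ∞) :
    chiSq (m.withDensity r) (m.withDensity p)
      = ∫⁻ z, p z * ENNReal.ofReal (((r z / p z).toReal - 1) ^ 2) ∂m := by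
  have : SigmaFinite (m.withDensity p) := SigmaFinite.withDensity_of_ne_top' hpt
  have hr_eq : m.withDensity r = (m.withDensity p).withDensity (r / p) := by
    rw [← withDensity_mul _ hp (hr.div hp)]
    congr 1
    funext z
    exact (ENNReal.mul_div_cancel (hp0 z) (hpt z)).symm
  have hrn : (m.withDensity r).rnDeriv (m.withDensity p) =ᵐ[m.withDensity p] r / p :=
    hr_eq ▸ Measure.rnDeriv_withDensity _ (hr.div hp)
  rw [chiSq, lintegral_congr_ae (hrn.mono fun z hz => by rw [hz]),
    lintegral_withDensity_eq_lintegral_mul _ hp (by fun_prop)]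
  rfl

section Convolution

variable {G : Type*} [AddCommGroup G] [MeasurableSpace G] (μ : Measure G) {g : G → ℝ≥0∞}

def convDensity (g : G → ℝ≥0∞) (μ : Measure G) (z : G) : ℝ≥0∞ := ∫⁻ x, g (z - x) ∂μ

/-- The density of the conditional law of `x` given `x + y = z` with respect to `μ`, when `x ~ μ`
and `y ~ ν.withDensity g` are independent. -/
def posteriorDensity (g : G → ℝ≥0∞) (μ : Measure G) (z x : G) : ℝ :=
  (g (z - x) / convDensity g μ z).toReal

lemma convDensity_ne_top [IsFiniteMeasure μ] {C : ℝ≥0∞} (hC : C ≠ ∞) (hgC : ∀ x, g x ≤ C)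
    (z : G) : convDensity g μ z ≠ ∞ :=
  ne_top_of_le_ne_top (ENNReal.mul_ne_top hC (measure_ne_top μ Set.univ))
    ((lintegral_mono fun x => hgC (z - x)).trans_eq (lintegral_const C))

variable [MeasurableAdd₂ G] [MeasurableNeg G]

lemma convDensity_ne_zero [NeZero μ] (hg : Measurable g) (hg0 : ∀ x, g x ≠ 0) (z : G) :
    convDensity g μ z ≠ 0 := by
  rw [convDensity, Ne, lintegral_eq_zero_iff (by fun_prop)]
  intro h
  obtain ⟨x, hx⟩ := h.exists
  exact hg0 _ hx

lemma lintegral_div_convDensity (hg : Measurable g) (z : G) (h0 : convDensity g μ z ≠ 0)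
    (htop : convDensity g μ z ≠ ∞) : ∫⁻ x, g (z - x) / convDensity g μ z ∂μ = 1 := by
  simp_rw [div_eq_mul_inv]
  rw [lintegral_mul_const _ (by fun_prop), ← convDensity, ENNReal.mul_inv_cancel h0 htop]

lemma integrable_posteriorDensity (hg : Measurable g) (z : G) (h0 : convDensity g μ z ≠ 0)
    (htop : convDensity g μ z ≠ ∞) : Integrable (posteriorDensity g μ z) μ :=
  integrable_toReal_of_lintegral_ne_top (by fun_prop)
    (by rw [lintegral_div_convDensity μ hg z h0 htop]; exact ENNReal.one_ne_top)

lemma integral_posteriorDensity (hg : Measurable g) (z : G) (h0 : convDensity g μ z ≠ 0)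
    (htop : convDensity g μ z ≠ ∞) : μ[posteriorDensity g μ z] = 1 := by
  have hlin := lintegral_div_convDensity μ hg z h0 htop
  unfold posteriorDensity
  rw [integral_toReal (by fun_prop) (ae_lt_top (by fun_prop) (by simp [hlin])),
    hlin, ENNReal.toReal_one]

variable [SFinite μ] {ν : Measure G} [SFinite ν] [ν.IsAddLeftInvariant]

@[fun_prop]
lemma measurable_convDensity (hg : Measurable g) : Measurable (convDensity g μ) :=
  Measurable.lintegral_prod_right' (f := fun p : G × G => g (p.1 - p.2)) (by fun_prop)

@[fun_prop]
lemma Measurable.posteriorDensity {X : Type*} [MeasurableSpace X] (hg : Measurable g)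
    {f h : X → G} (hf : Measurable f) (hh : Measurable h) :
    Measurable fun x => posteriorDensity g μ (f x) (h x) :=
  ((hg.comp (hf.sub hh)).div ((measurable_convDensity μ hg).comp hf)).ennreal_toReal

lemma map_shear_prod_withDensity (hg : Measurable g) :
    (μ.prod (ν.withDensity g)).map (fun p => (p.1, p.1 + p.2))
      = (μ.prod ν).withDensity fun p => g (p.2 - p.1) := by
  have hshear : (fun p : G × G => g p.2)
      = (fun p : G × G => g (p.2 - p.1)) ∘ MeasurableEquiv.shearAddRight G := by
    funext p
    simp [MeasurableEquiv.shearAddRight, Equiv.prodShear]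
  rw [prod_withDensity_right hg, hshear,
    show (fun p : G × G => (p.1, p.1 + p.2)) = MeasurableEquiv.shearAddRight G from rfl,
    MeasurableEquiv.map_withDensity_comp _ _ (by fun_prop)]
  congr 1
  exact (measurePreserving_prod_add μ ν).map_eq

lemma map_add_prod_withDensity (hg : Measurable g) :
    (μ.prod (ν.withDensity g)).map (fun p => p.1 + p.2) = ν.withDensity (convDensity g μ) := by
  rw [show (fun p : G × G => p.1 + p.2) = Prod.snd ∘ fun p => (p.1, p.1 + p.2) from rfl,
    ← Measure.map_map measurable_snd (by fun_prop), map_shear_prod_withDensity μ hg,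
    map_snd_prod_withDensity μ ν (by fun_prop)]
  rfl

end Convolution

section GaussianSmoothing

variable {d : ℕ} {σ : ℝ}

def gaussPDF (d : ℕ) (σ : ℝ) (x : Euc d) : ℝ≥0∞ := ENNReal.ofReal (gaussDensity d σ x)

@[fun_prop]
lemma measurable_gaussPDF : Measurable (gaussPDF d σ) := by
  unfold gaussPDF gaussDensity
  fun_prop

lemma gaussPDF_ne_zero (hσ : σ ≠ 0) (x : Euc d) : gaussPDF d σ x ≠ 0 := by
  rw [gaussPDF, Ne, ENNReal.ofReal_eq_zero, not_le]
  exact mul_pos (Real.rpow_pos_of_pos (by positivity) _) (Real.exp_pos _)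

lemma gaussPDF_le (x : Euc d) :
    gaussPDF d σ x ≤ ENNReal.ofReal ((2 * π * σ ^ 2) ^ (-(d : ℝ) / 2)) := by
  refine ENNReal.ofReal_le_ofReal (mul_le_of_le_one_right (by positivity) ?_)
  exact Real.exp_le_one_iff.mpr (div_nonpos_of_nonpos_of_nonneg (by simp) (by positivity))

lemma convDensity_gaussPDF_ne_top (μ : Measure (Euc d)) [IsFiniteMeasure μ] (z : Euc d) :
    convDensity (gaussPDF d σ) μ z ≠ ∞ :=
  convDensity_ne_top μ ENNReal.ofReal_ne_top gaussPDF_le z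

lemma mconv_gaussian_eq_withDensity (μ : Measure (Euc d)) [SFinite μ] :
    mconv μ (gaussian d σ) = volume.withDensity (convDensity (gaussPDF d σ) μ) :=
  map_add_prod_withDensity μ measurable_gaussPDF

lemma jointSY_eq_withDensity (P : Measure (Euc d)) [SFinite P] :
    jointSY P σ = (P.prod volume).withDensity fun p => gaussPDF d σ (p.2 - p.1) :=
  map_shear_prod_withDensity P measurable_gaussPDF

lemma convDensity_empMeasure {n : ℕ} {g : Euc d → ℝ≥0∞} (hg : Measurable g)
    (s : Fin n → Euc d) (z : Euc d) :
    convDensity g (empMeasure s) z = (n : ℝ≥0∞)⁻¹ * ∑ i, g (z - s i) := by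
  rw [convDensity, empMeasure, lintegral_smul_measure, lintegral_finsetSum_measure]
  congr 1
  exact Finset.sum_congr rfl fun i _ => lintegral_dirac' _ (by fun_prop)

instance {n : ℕ} (s : Fin n → Euc d) : IsFiniteMeasure (empMeasure s) := by
  constructor
  rcases eq_or_ne n 0 with rfl | hn
  · simp [empMeasure]
  · simp [empMeasure, ENNReal.inv_mul_cancel (Nat.cast_ne_zero.mpr hn)]

variable (P : Measure (Euc d)) [IsProbabilityMeasure P]

instance (n : ℕ) : IsProbabilityMeasure (samples n P) := by
  unfold samples
  infer_instance

lemma chiSq_mconv_empMeasure_gaussian (hσ : σ ≠ 0) {n : ℕ} (s : Fin n → Euc d) :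
    chiSq (mconv (empMeasure s) (gaussian d σ)) (mconv P (gaussian d σ))
      = ∫⁻ z, convDensity (gaussPDF d σ) P z * ENNReal.ofReal
          (((n : ℝ)⁻¹ * ∑ i, posteriorDensity (gaussPDF d σ) P z (s i) - 1) ^ 2) := by
  have h0 := convDensity_ne_zero P measurable_gaussPDF (gaussPDF_ne_zero hσ)
  rw [mconv_gaussian_eq_withDensity, mconv_gaussian_eq_withDensity,
    chiSq_withDensity_withDensity _ (by fun_prop) (by fun_prop) h0 (convDensity_gaussPDF_ne_top P)]
  refine lintegral_congr fun z => ?_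
  rw [convDensity_empMeasure measurable_gaussPDF, mul_div_assoc, ENNReal.toReal_mul,
    ENNReal.toReal_inv, ENNReal.toReal_natCast, div_eq_mul_inv, Finset.sum_mul,
    ENNReal.toReal_sum fun i _ => by
      exact ENNReal.mul_ne_top ENNReal.ofReal_ne_top (ENNReal.inv_ne_top.mpr (h0 z))]
  rfl

lemma chiMI_eq_lintegral_posteriorDensity (hσ : σ ≠ 0) :
    chiMI P σ = ∫⁻ z, convDensity (gaussPDF d σ) P z *
      ∫⁻ x, ENNReal.ofReal ((posteriorDensity (gaussPDF d σ) P z x - 1) ^ 2) ∂P := by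
  rw [chiMI, jointSY_eq_withDensity, mconv_gaussian_eq_withDensity,
    prod_withDensity_right (by fun_prop),
    chiSq_withDensity_withDensity (P.prod volume) (p := fun p => convDensity (gaussPDF d σ) P p.2)
      (by fun_prop) (by fun_prop)
      (fun p => convDensity_ne_zero P measurable_gaussPDF (gaussPDF_ne_zero hσ) p.2)
      (fun p => convDensity_gaussPDF_ne_top P p.2),
    lintegral_prod_symm _ (by fun_prop)]
  refine lintegral_congr fun z => ?_
  exact lintegral_const_mul (convDensity (gaussPDF d σ) P z) (by fun_prop)

lemma lintegral_sq_mean_posteriorDensity_sub_one (hσ : σ ≠ 0) {n : ℕ} (hn : n ≠ 0)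
    (z : Euc d) :
    ∫⁻ s, ENNReal.ofReal (((n : ℝ)⁻¹ * ∑ i, posteriorDensity (gaussPDF d σ) P z (s i) - 1) ^ 2)
        ∂(samples n P)
      = (n : ℝ≥0∞)⁻¹ *
          ∫⁻ x, ENNReal.ofReal ((posteriorDensity (gaussPDF d σ) P z x - 1) ^ 2) ∂P := by
  have : Nonempty (Fin n) := ⟨⟨0, Nat.pos_of_ne_zero hn⟩⟩
  have h0 := convDensity_ne_zero P measurable_gaussPDF (gaussPDF_ne_zero hσ) z
  have htop := convDensity_gaussPDF_ne_top (σ := σ) P z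
  have := lintegral_sq_mean_sub_integral_pi (ι := Fin n)
    (t := posteriorDensity (gaussPDF d σ) P z) (by fun_prop) (fun x => ENNReal.toReal_nonneg)
    (integrable_posteriorDensity P measurable_gaussPDF z h0 htop)
  rwa [integral_posteriorDensity P measurable_gaussPDF z h0 htop, Fintype.card_fin] at this

end GaussianSmoothing

/-- **χ²-divergence and mutual information.**
`E[χ²(P̂ₙ ∗ N_σ ‖ P ∗ N_σ)] = I_{χ²}(S; Y) / n`. -/
theorem chiSq_empirical_eq_chiMI (d n : ℕ) (hn : 1 ≤ n) (σ : ℝ) (hσ : 0 < σ)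
    (P : Measure (Euc d)) [IsProbabilityMeasure P] :
    ∫⁻ s, chiSq (mconv (empMeasure s) (gaussian d σ)) (mconv P (gaussian d σ)) ∂(samples n P)
      = chiMI P σ / n := by
  set φ := gaussPDF d σ
  set q := convDensity φ P
  calc _ = ∫⁻ s, (∫⁻ z, q z * ENNReal.ofReal
          (((n : ℝ)⁻¹ * ∑ i, posteriorDensity φ P z (s i) - 1) ^ 2)) ∂(samples n P) :=
        lintegral_congr fun s => chiSq_mconv_empMeasure_gaussian P hσ.ne' s
    _ = ∫⁻ z, q z * ((n : ℝ≥0∞)⁻¹ *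
          ∫⁻ x, ENNReal.ofReal ((posteriorDensity φ P z x - 1) ^ 2) ∂P) := by
        rw [lintegral_lintegral_swap (by fun_prop)]
        refine lintegral_congr fun z => ?_
        rw [lintegral_const_mul' _ _ (convDensity_gaussPDF_ne_top P z),
          lintegral_sq_mean_posteriorDensity_sub_one P hσ.ne' (by omega)]
    _ = chiMI P σ / n := by
        rw [chiMI_eq_lintegral_posteriorDensity P hσ.ne', ENNReal.div_eq_inv_mul,
          ← lintegral_const_mul' _ _ (by simp; omega)]
        exact lintegral_congr fun z => mul_left_comm _ _ _
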